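/- Let n ≥ 1 and λ ≥ 2 be integers. Let h, h_1, …, h_r : ℤⁿ → ℝ be finitely supported functions whose masks τ(ω) = Σ_k h(k) e^{−ik·ω} and q_i(ω) = Σ_k h_i(k) e^{−ik·ω} satisfy, for all ω ∈ ℝⁿ and all γ ∈ Γ: τ(ω)·conj(τ(ω+γ)) + Σ_{i=1}^{r} q_i(ω)·conj(q_i(ω+γ)) equals λⁿ if γ = 0 and equals 0 if γ ≠ 0. For y : ℤⁿ → ℂ let D(y) : ℤⁿ → ℂ be defined by D(y)(k) = y(k) if k ∈ λℤⁿ and D(y)(k) = 0 otherwise, and set h̃(k) = h(−k), h̃_i(k) = h_i(−k). Then for every finitely supported x : ℤⁿ → ℂ: x = h ⋆ D(h̃ ⋆ x) + Σ_{i=1}^{r} h_i ⋆ D(h̃_i ⋆ x), where (a ⋆ y)(k) = Σ_{j∈ℤⁿ} a(j) y(k − j). In other words, a tight wavelet filter bank gives perfect reconstruction: one cycle of the analysis algorithm (filtering by h̃, h̃_i and downsampling by λ) followed by the synthesis algorithm (upsampling by λ, filtering by h, h_i, and summing) returns the input. -/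

import Mathlib

open Complex Real Function ComplexConjugate BigOperators

noncomputable section

open scoped Classical

/-- The dot product of `k ∈ ℤⁿ` with `ω ∈ ℝⁿ`. -/
def zdot {n : ℕ} (k : Fin n → ℤ) (ω : Fin n → ℝ) : ℝ := ∑ i, (k i : ℝ) * ω i

/-- `Γ = {2πν/λ : ν ∈ {0,1,…,λ-1}ⁿ}`. -/
def GammaSet (n lam : ℕ) : Set (Fin n → ℝ) :=
  Set.range (fun ν : Fin n → Fin lam => fun i => 2 * π * (ν i : ℝ) / (lam : ℝ))

/-- The mask `τ(ω) = Σ_{k∈ℤⁿ} h(k) e^{-ik·ω}` of a real filter `h`. -/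
def mask (n : ℕ) (h : (Fin n → ℤ) → ℝ) (ω : Fin n → ℝ) : ℂ :=
  ∑ᶠ k : Fin n → ℤ, (h k : ℂ) * Complex.exp (-Complex.I * ((zdot k ω : ℝ) : ℂ))

/-- Convolution of sequences on `ℤⁿ`: `(a ⋆ y)(k) = Σ_j a(j) y(k - j)`. -/
def conv {n : ℕ} (a y : (Fin n → ℤ) → ℂ) : (Fin n → ℤ) → ℂ :=
  fun k => ∑ᶠ j : Fin n → ℤ, a j * y (k - j)

/-- Downsampling followed by upsampling:
`D(y)(k) = y(k)` if `k ∈ λℤⁿ` and `0` otherwise. -/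
def downUp (n lam : ℕ) (y : (Fin n → ℤ) → ℂ) : (Fin n → ℤ) → ℂ :=
  fun k => if ∀ i, (lam : ℤ) ∣ k i then y k else 0

def eC (t : ℝ) : ℂ := Complex.exp (Complex.I * t)

lemma eC_add (s t : ℝ) : eC (s + t) = eC s * eC t := by
  simp [eC, ← Complex.exp_add, mul_add]

lemma eC_zero : eC 0 = 1 := by simp [eC]

lemma conj_eC (t : ℝ) : conj (eC t) = eC (-t) := by
  rw [eC, eC, ← Complex.exp_conj, map_mul, Complex.conj_I, Complex.conj_ofReal]
  push_cast
  ring_nf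

lemma zdot_add_right {n : ℕ} (k : Fin n → ℤ) (ω γ : Fin n → ℝ) :
    zdot k (ω + γ) = zdot k ω + zdot k γ := by
  simp [zdot, mul_add, Finset.sum_add_distrib]

lemma zdot_sub_left {n : ℕ} (a b : Fin n → ℤ) (ω : Fin n → ℝ) :
    zdot (a - b) ω = zdot a ω - zdot b ω := by
  simp [zdot, sub_mul, Finset.sum_sub_distrib]

lemma zdot_neg_left {n : ℕ} (a : Fin n → ℤ) (ω : Fin n → ℝ) :
    zdot (-a) ω = -zdot a ω := by
  simp [zdot]

lemma zdot_zero_right {n : ℕ} (k : Fin n → ℤ) : zdot k 0 = 0 := by simp [zdot]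

/-- geometric sum of roots of unity -/
lemma root_sum (N : ℕ) (hN : 1 ≤ N) (d : ℤ) :
    ∑ u ∈ Finset.range N, eC (2 * π * d * u / N) = if (N : ℤ) ∣ d then (N : ℂ) else 0 := by
  have hN0 : (N : ℝ) ≠ 0 := by positivity
  set z : ℂ := eC (2 * π * d / N) with hz
  have hzu : ∀ u : ℕ, eC (2 * π * d * u / N) = z ^ u := by
    intro u
    rw [hz, eC, eC, ← Complex.exp_nat_mul]
    congr 1
    push_cast
    ring
  have hzN : z ^ N = 1 := by
    rw [← hzu]
    have : 2 * π * d * N / N = d * (2 * π) := by field_simp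
    rw [this, eC]
    have : Complex.I * ((d : ℝ) * (2 * π) : ℝ) = (d : ℤ) * (2 * π * Complex.I) := by
      push_cast; ring
    rw [this, Complex.exp_int_mul_two_pi_mul_I]
  by_cases hdvd : (N : ℤ) ∣ d
  · have hz1 : z = 1 := by
      obtain ⟨e, he⟩ := hdvd
      rw [hz, eC]
      have : (2 * π * d / N : ℝ) = ((e : ℤ) : ℝ) * (2 * π) := by
        rw [he]; push_cast; field_simp
      rw [this]
      have : Complex.I * (((e : ℤ) : ℝ) * (2 * π) : ℝ) = ((e : ℤ) : ℂ) * (2 * π * Complex.I) := by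
        push_cast; ring
      rw [this, Complex.exp_int_mul_two_pi_mul_I]
    simp only [hzu, hz1, one_pow, Finset.sum_const, Finset.card_range, nsmul_eq_mul, mul_one,
      if_pos hdvd]
  · have hz1 : z ≠ 1 := by
      intro hz1
      rw [hz, eC, Complex.exp_eq_one_iff] at hz1
      obtain ⟨m, hm⟩ := hz1
      apply hdvd
      have : (2 * π * d / N : ℝ) = (m : ℝ) * (2 * π) := by
        have := hm
        rw [show ((m : ℂ) * (2 * ↑π * Complex.I)) = Complex.I * (((m : ℝ) * (2 * π) : ℝ) : ℂ) by push_cast; ring] at this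
        exact_mod_cast mul_left_cancel₀ Complex.I_ne_zero this
      have hd : (d : ℝ) = (m : ℝ) * N := by
        field_simp at this
        nlinarith [Real.pi_pos, this]
      have hd' : d = m * N := by exact_mod_cast hd
      exact ⟨m, by rw [hd', mul_comm]⟩
    rw [if_neg hdvd]
    simp only [hzu]
    rw [geom_sum_eq hz1, hzN]
    simp

lemma eC_sum {ι : Type*} (s : Finset ι) (f : ι → ℝ) :
    eC (∑ i ∈ s, f i) = ∏ i ∈ s, eC (f i) := by
  simp only [eC, Finset.mul_sum, Complex.ofReal_sum, Complex.exp_sum]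

lemma root_sum_multi (n N : ℕ) (hN : 1 ≤ N) (d : Fin n → ℤ) :
    ∑ ν : Fin n → Fin N, eC (∑ j, (d j : ℝ) * (2 * π * (ν j : ℝ) / N)) =
      if ∀ j, (N : ℤ) ∣ d j then (N : ℂ) ^ n else 0 := by
  have step1 : ∀ ν : Fin n → Fin N,
      eC (∑ j, (d j : ℝ) * (2 * π * (ν j : ℝ) / N)) =
        ∏ j, eC ((d j : ℝ) * (2 * π * (ν j : ℝ) / N)) := fun ν => eC_sum _ _
  simp only [step1]
  rw [← Fintype.prod_sum (fun j (v : Fin N) => eC ((d j : ℝ) * (2 * π * (v : ℝ) / N)))]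
  have step2 : ∀ j, (∑ v : Fin N, eC ((d j : ℝ) * (2 * π * (v : ℝ) / N)))
      = if (N : ℤ) ∣ d j then (N : ℂ) else 0 := by
    intro j
    rw [← root_sum N hN (d j), Fin.sum_univ_eq_sum_range
      (fun v : ℕ => eC ((d j : ℝ) * (2 * π * (v : ℝ) / N)))]
    exact Finset.sum_congr rfl fun u _ => by congr 1; ring
  simp only [step2]
  by_cases hall : ∀ j, (N : ℤ) ∣ d j
  · simp [hall]
  · push_neg at hall
    obtain ⟨j, hj⟩ := hall
    rw [if_neg (by push_neg; exact ⟨j, hj⟩)]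
    exact Finset.prod_eq_zero (Finset.mem_univ j) (by rw [if_neg hj])

lemma mask_eq_sum (n : ℕ) (g : (Fin n → ℤ) → ℝ) (R : Finset (Fin n → ℤ))
    (hg : Function.support g ⊆ R) (ω : Fin n → ℝ) :
    mask n g ω = ∑ k ∈ R, (g k : ℂ) * eC (-(zdot k ω)) := by
  have harg : ∀ k : Fin n → ℤ,
      (g k : ℂ) * Complex.exp (-Complex.I * ((zdot k ω : ℝ) : ℂ)) =
        (g k : ℂ) * eC (-(zdot k ω)) := by
    intro k
    congr 1
    rw [eC]
    congr 1
    push_cast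
    ring
  rw [mask]
  simp only [harg]
  apply finsum_eq_sum_of_support_subset
  intro k hk
  apply hg
  intro hgk
  simp [Function.mem_support, hgk] at hk

lemma expand_prod (n : ℕ) (g : (Fin n → ℤ) → ℝ) (R : Finset (Fin n → ℤ))
    (hg : Function.support g ⊆ R) (ω γ : Fin n → ℝ) (l : Fin n → ℤ) :
    eC (-(zdot l γ)) * (mask n g ω * conj (mask n g (ω + γ))) =
      ∑ u ∈ R, ∑ b ∈ R,
        ((g u : ℂ) * g b) * eC (zdot (b - u) ω) * eC (zdot (b - l) γ) := by
  rw [mask_eq_sum n g R hg, mask_eq_sum n g R hg, map_sum, Finset.sum_mul_sum,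
    Finset.mul_sum]
  refine Finset.sum_congr rfl fun u _ => ?_
  rw [Finset.mul_sum]
  refine Finset.sum_congr rfl fun b _ => ?_
  rw [map_mul, Complex.conj_ofReal, conj_eC, neg_neg]
  calc eC (-zdot l γ) * ((g u : ℂ) * eC (-zdot u ω) * ((g b : ℂ) * eC (zdot b (ω + γ))))
      = ((g u : ℂ) * g b) * (eC (-zdot l γ) * eC (-zdot u ω) * eC (zdot b (ω + γ))) := by
        ring
    _ = ((g u : ℂ) * g b) * eC (-zdot l γ + -zdot u ω + zdot b (ω + γ)) := by
        rw [eC_add, eC_add]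
    _ = ((g u : ℂ) * g b) * eC (zdot (b - u) ω + zdot (b - l) γ) := by
        rw [zdot_add_right, zdot_sub_left, zdot_sub_left]; ring_nf
    _ = ((g u : ℂ) * g b) * eC (zdot (b - u) ω) * eC (zdot (b - l) γ) := by
        rw [eC_add]; ring

lemma stepA (n lam s : ℕ) (hlam : 2 ≤ lam) (f : ℕ → (Fin n → ℤ) → ℝ)
    (R : Finset (Fin n → ℤ))
    (hsupp : ∀ i ∈ Finset.range s, Function.support (f i) ⊆ R)
    (hmask : ∀ ω : Fin n → ℝ, ∀ ν : Fin n → Fin lam,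
      ∑ i ∈ Finset.range s,
        mask n (f i) ω * conj (mask n (f i) (ω + fun j => 2 * π * (ν j : ℝ) / lam)) =
        if ν = (fun _ => (⟨0, by omega⟩ : Fin lam)) then (lam : ℂ) ^ n else 0)
    (l : Fin n → ℤ) (ω : Fin n → ℝ) :
    ∑ i ∈ Finset.range s, ∑ u ∈ R, ∑ b ∈ R,
      ((f i u : ℂ) * f i b) * eC (zdot (b - u) ω) *
        (if ∀ j, (lam : ℤ) ∣ (b j - l j) then ((lam : ℂ) ^ n) else 0) = (lam : ℂ) ^ n := by
  haveI : NeZero lam := ⟨by omega⟩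
  have hlam1 : 1 ≤ lam := by omega
  have h1 : ∀ ν : Fin n → Fin lam,
      eC (-(zdot l (fun j => 2 * π * (ν j : ℝ) / lam))) *
        (∑ i ∈ Finset.range s,
          mask n (f i) ω * conj (mask n (f i) (ω + fun j => 2 * π * (ν j : ℝ) / lam))) =
      ∑ i ∈ Finset.range s, ∑ u ∈ R, ∑ b ∈ R,
        ((f i u : ℂ) * f i b) * eC (zdot (b - u) ω) *
          eC (zdot (b - l) (fun j => 2 * π * (ν j : ℝ) / lam)) := by
    intro ν
    rw [Finset.mul_sum]
    exact Finset.sum_congr rfl fun i hi => expand_prod n (f i) R (hsupp i hi) ω _ l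
  have h2 : ∑ ν : Fin n → Fin lam,
      eC (-(zdot l (fun j => 2 * π * (ν j : ℝ) / lam))) *
        (∑ i ∈ Finset.range s,
          mask n (f i) ω * conj (mask n (f i) (ω + fun j => 2 * π * (ν j : ℝ) / lam))) =
      (lam : ℂ) ^ n := by
    simp only [hmask, mul_ite, mul_zero]
    rw [Finset.sum_ite_eq' Finset.univ (fun _ => (⟨0, by omega⟩ : Fin lam))
      (fun ν => eC (-(zdot l (fun j => 2 * π * (ν j : ℝ) / lam))) * (lam : ℂ) ^ n)]
    simp [zdot, eC_zero]
  have hroot : ∀ b : Fin n → ℤ,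
      (∑ ν : Fin n → Fin lam, eC (zdot (b - l) (fun j => 2 * π * (ν j : ℝ) / lam))) =
        if ∀ j, (lam : ℤ) ∣ (b j - l j) then ((lam : ℂ) ^ n) else 0 := by
    intro b
    have hr := root_sum_multi n lam hlam1 (b - l)
    simp only [Pi.sub_apply] at hr
    rw [← hr]
    exact Finset.sum_congr rfl fun ν _ => by simp [zdot]
  calc ∑ i ∈ Finset.range s, ∑ u ∈ R, ∑ b ∈ R,
        ((f i u : ℂ) * f i b) * eC (zdot (b - u) ω) *
          (if ∀ j, (lam : ℤ) ∣ (b j - l j) then ((lam : ℂ) ^ n) else 0)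
      = ∑ i ∈ Finset.range s, ∑ u ∈ R, ∑ b ∈ R,
        ((f i u : ℂ) * f i b) * eC (zdot (b - u) ω) *
          (∑ ν : Fin n → Fin lam, eC (zdot (b - l) (fun j => 2 * π * (ν j : ℝ) / lam))) := by
        refine Finset.sum_congr rfl fun i _ => Finset.sum_congr rfl fun u _ =>
          Finset.sum_congr rfl fun b _ => ?_
        rw [hroot b]
    _ = ∑ i ∈ Finset.range s, ∑ u ∈ R, ∑ b ∈ R, ∑ ν : Fin n → Fin lam,
        ((f i u : ℂ) * f i b) * eC (zdot (b - u) ω) *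
          eC (zdot (b - l) (fun j => 2 * π * (ν j : ℝ) / lam)) := by
        simp only [Finset.mul_sum]
    _ = ∑ i ∈ Finset.range s, ∑ u ∈ R, ∑ ν : Fin n → Fin lam, ∑ b ∈ R,
        ((f i u : ℂ) * f i b) * eC (zdot (b - u) ω) *
          eC (zdot (b - l) (fun j => 2 * π * (ν j : ℝ) / lam)) := by
        exact Finset.sum_congr rfl fun i _ => Finset.sum_congr rfl fun u _ =>
          Finset.sum_comm
    _ = ∑ i ∈ Finset.range s, ∑ ν : Fin n → Fin lam, ∑ u ∈ R, ∑ b ∈ R,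
        ((f i u : ℂ) * f i b) * eC (zdot (b - u) ω) *
          eC (zdot (b - l) (fun j => 2 * π * (ν j : ℝ) / lam)) := by
        exact Finset.sum_congr rfl fun i _ => Finset.sum_comm
    _ = ∑ ν : Fin n → Fin lam, ∑ i ∈ Finset.range s, ∑ u ∈ R, ∑ b ∈ R,
        ((f i u : ℂ) * f i b) * eC (zdot (b - u) ω) *
          eC (zdot (b - l) (fun j => 2 * π * (ν j : ℝ) / lam)) := Finset.sum_comm
    _ = (lam : ℂ) ^ n := by
        rw [← h2]
        exact Finset.sum_congr rfl fun ν _ => (h1 ν).symm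

lemma keyId (n lam s : ℕ) (hlam : 2 ≤ lam) (f : ℕ → (Fin n → ℤ) → ℝ)
    (R : Finset (Fin n → ℤ))
    (hsupp : ∀ i ∈ Finset.range s, Function.support (f i) ⊆ R)
    (hmask : ∀ ω : Fin n → ℝ, ∀ ν : Fin n → Fin lam,
      ∑ i ∈ Finset.range s,
        mask n (f i) ω * conj (mask n (f i) (ω + fun j => 2 * π * (ν j : ℝ) / lam)) =
        if ν = (fun _ => (⟨0, by omega⟩ : Fin lam)) then (lam : ℂ) ^ n else 0)
    (k l : Fin n → ℤ) :
    ∑ i ∈ Finset.range s, ∑ b ∈ R,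
      (if ∀ j, (lam : ℤ) ∣ (b j - l j) then ((f i (b - (l - k)) : ℂ) * f i b) else 0)
      = if k = l then 1 else 0 := by
  set m : Fin n → ℤ := l - k with hm
  obtain ⟨Rb, hbnd⟩ : ∃ Rb : ℕ, ∀ b ∈ R, ∀ j, (b j).natAbs ≤ Rb :=
    ⟨R.sup (fun b => Finset.univ.sup (fun j => (b j).natAbs)), fun b hb j =>
      le_trans (Finset.le_sup (f := fun j => (b j).natAbs) (Finset.mem_univ j))
        (Finset.le_sup (f := fun b => Finset.univ.sup (fun j => (b j).natAbs)) hb)⟩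
  obtain ⟨Mm, hMmb⟩ : ∃ Mm : ℕ, ∀ j, (m j).natAbs ≤ Mm :=
    ⟨Finset.univ.sup (fun j => (m j).natAbs), fun j =>
      Finset.le_sup (f := fun j => (m j).natAbs) (Finset.mem_univ j)⟩
  set N : ℕ := 2 * Rb + Mm + 1 with hN
  have hN1 : 1 ≤ N := by omega
  have hNne : ((N : ℂ)) ^ n ≠ 0 := pow_ne_zero _ (Nat.cast_ne_zero.2 (by omega))
  have hlamne : ((lam : ℂ)) ^ n ≠ 0 := pow_ne_zero _ (Nat.cast_ne_zero.2 (by omega))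
  have hA := stepA n lam s hlam f R hsupp hmask l
  -- the grid points
  have hS : ∑ μ : Fin n → Fin N, eC (-(zdot m (fun j => 2 * π * (μ j : ℝ) / N))) * (lam : ℂ) ^ n
      = (if k = l then 1 else 0) * ((N : ℂ) ^ n * (lam : ℂ) ^ n) := by
    rw [← Finset.sum_mul]
    have harg : ∀ μ : Fin n → Fin N,
        eC (-(zdot m (fun j => 2 * π * (μ j : ℝ) / N))) =
          eC (∑ j, (((-m) j : ℤ) : ℝ) * (2 * π * (μ j : ℝ) / N)) := by
      intro μ
      rw [← zdot_neg_left]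
      simp [zdot]
    simp only [harg]
    rw [root_sum_multi n N hN1 (-m)]
    by_cases hkl : k = l
    · have hm0 : m = 0 := by rw [hm, hkl, sub_self]
      rw [if_pos hkl, if_pos (by intro j; simp [hm0])]
      ring
    · rw [if_neg hkl, if_neg, zero_mul, zero_mul]
      intro hcond
      apply hkl
      have hm0 : m = 0 := by
        funext j
        have h1 := hcond j
        have h2 : |(-m) j| < (N : ℤ) := by
          have := hMmb j
          rw [Pi.neg_apply, abs_neg, Int.abs_eq_natAbs]
          exact_mod_cast by omega
        have := Int.eq_zero_of_abs_lt_dvd h1 h2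
        simpa using this
      rw [hm] at hm0
      exact (sub_eq_zero.mp hm0).symm
  have hL : ∑ μ : Fin n → Fin N, eC (-(zdot m (fun j => 2 * π * (μ j : ℝ) / N))) * (lam : ℂ) ^ n
      = (∑ i ∈ Finset.range s, ∑ b ∈ R,
          (if ∀ j, (lam : ℤ) ∣ (b j - l j) then ((f i (b - m) : ℂ) * f i b) else 0))
        * ((N : ℂ) ^ n * (lam : ℂ) ^ n) := by
    have hcond : ∀ u ∈ R, ∀ b ∈ R,
        ((∀ j, (N : ℤ) ∣ (b - u - m) j) ↔ u = b - m) := by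
      intro u hu b hb
      constructor
      · intro hd
        funext j
        have h2 : |(b - u - m) j| < (N : ℤ) := by
          simp only [Pi.sub_apply]
          have h3 := hbnd b hb j
          have h4 := hbnd u hu j
          have h5 := hMmb j
          rw [Int.abs_eq_natAbs]
          omega
        have h0 := Int.eq_zero_of_abs_lt_dvd (hd j) h2
        simp only [Pi.sub_apply] at h0 ⊢
        omega
      · rintro rfl j
        simp
    calc ∑ μ : Fin n → Fin N, eC (-(zdot m (fun j => 2 * π * (μ j : ℝ) / N))) * (lam : ℂ) ^ n
        = ∑ μ : Fin n → Fin N, eC (-(zdot m (fun j => 2 * π * (μ j : ℝ) / N))) *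
            (∑ i ∈ Finset.range s, ∑ u ∈ R, ∑ b ∈ R,
              ((f i u : ℂ) * f i b) * eC (zdot (b - u) (fun j => 2 * π * (μ j : ℝ) / N)) *
                (if ∀ j, (lam : ℤ) ∣ (b j - l j) then ((lam : ℂ) ^ n) else 0)) :=
          Finset.sum_congr rfl fun μ _ => by rw [hA _]
      _ = ∑ μ : Fin n → Fin N, ∑ i ∈ Finset.range s, ∑ u ∈ R, ∑ b ∈ R,
            eC (-(zdot m (fun j => 2 * π * (μ j : ℝ) / N))) *
              (((f i u : ℂ) * f i b) * eC (zdot (b - u) (fun j => 2 * π * (μ j : ℝ) / N)) *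
                (if ∀ j, (lam : ℤ) ∣ (b j - l j) then ((lam : ℂ) ^ n) else 0)) := by
          simp only [Finset.mul_sum]
      _ = ∑ i ∈ Finset.range s, ∑ μ : Fin n → Fin N, ∑ u ∈ R, ∑ b ∈ R,
            eC (-(zdot m (fun j => 2 * π * (μ j : ℝ) / N))) *
              (((f i u : ℂ) * f i b) * eC (zdot (b - u) (fun j => 2 * π * (μ j : ℝ) / N)) *
                (if ∀ j, (lam : ℤ) ∣ (b j - l j) then ((lam : ℂ) ^ n) else 0)) :=
          Finset.sum_comm
      _ = ∑ i ∈ Finset.range s, ∑ u ∈ R, ∑ μ : Fin n → Fin N, ∑ b ∈ R,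
            eC (-(zdot m (fun j => 2 * π * (μ j : ℝ) / N))) *
              (((f i u : ℂ) * f i b) * eC (zdot (b - u) (fun j => 2 * π * (μ j : ℝ) / N)) *
                (if ∀ j, (lam : ℤ) ∣ (b j - l j) then ((lam : ℂ) ^ n) else 0)) :=
          Finset.sum_congr rfl fun i _ => Finset.sum_comm
      _ = ∑ i ∈ Finset.range s, ∑ u ∈ R, ∑ b ∈ R, ∑ μ : Fin n → Fin N,
            eC (-(zdot m (fun j => 2 * π * (μ j : ℝ) / N))) *
              (((f i u : ℂ) * f i b) * eC (zdot (b - u) (fun j => 2 * π * (μ j : ℝ) / N)) *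
                (if ∀ j, (lam : ℤ) ∣ (b j - l j) then ((lam : ℂ) ^ n) else 0)) :=
          Finset.sum_congr rfl fun i _ => Finset.sum_congr rfl fun u _ => Finset.sum_comm
      _ = ∑ i ∈ Finset.range s, ∑ u ∈ R, ∑ b ∈ R,
            ((f i u : ℂ) * f i b *
              (if ∀ j, (lam : ℤ) ∣ (b j - l j) then ((lam : ℂ) ^ n) else 0)) *
              (if u = b - m then (N : ℂ) ^ n else 0) := by
          refine Finset.sum_congr rfl fun i hi => Finset.sum_congr rfl fun u hu =>
            Finset.sum_congr rfl fun b hb => ?_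
          have hcomb : ∀ μ : Fin n → Fin N,
              eC (-(zdot m (fun j => 2 * π * (μ j : ℝ) / N))) *
                (((f i u : ℂ) * f i b) * eC (zdot (b - u) (fun j => 2 * π * (μ j : ℝ) / N)) *
                  (if ∀ j, (lam : ℤ) ∣ (b j - l j) then ((lam : ℂ) ^ n) else 0)) =
              ((f i u : ℂ) * f i b *
                (if ∀ j, (lam : ℤ) ∣ (b j - l j) then ((lam : ℂ) ^ n) else 0)) *
                eC (zdot (b - u - m) (fun j => 2 * π * (μ j : ℝ) / N)) := by
            intro μ
            have he : eC (-(zdot m (fun j => 2 * π * (μ j : ℝ) / N))) *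
                eC (zdot (b - u) (fun j => 2 * π * (μ j : ℝ) / N)) =
                eC (zdot (b - u - m) (fun j => 2 * π * (μ j : ℝ) / N)) := by
              rw [← eC_add]
              congr 1
              rw [zdot_sub_left (b - u) m]
              ring
            calc eC (-(zdot m (fun j => 2 * π * (μ j : ℝ) / N))) *
                (((f i u : ℂ) * f i b) * eC (zdot (b - u) (fun j => 2 * π * (μ j : ℝ) / N)) *
                  (if ∀ j, (lam : ℤ) ∣ (b j - l j) then ((lam : ℂ) ^ n) else 0)) =
                ((f i u : ℂ) * f i b *
                  (if ∀ j, (lam : ℤ) ∣ (b j - l j) then ((lam : ℂ) ^ n) else 0)) *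
                  (eC (-(zdot m (fun j => 2 * π * (μ j : ℝ) / N))) *
                    eC (zdot (b - u) (fun j => 2 * π * (μ j : ℝ) / N))) := by ring
              _ = ((f i u : ℂ) * f i b *
                  (if ∀ j, (lam : ℤ) ∣ (b j - l j) then ((lam : ℂ) ^ n) else 0)) *
                  eC (zdot (b - u - m) (fun j => 2 * π * (μ j : ℝ) / N)) := by rw [he]
          simp only [hcomb]
          rw [← Finset.mul_sum]
          congr 1
          have harg2 : ∀ μ : Fin n → Fin N,
              eC (zdot (b - u - m) (fun j => 2 * π * (μ j : ℝ) / N)) =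
                eC (∑ j, (((b - u - m) j : ℤ) : ℝ) * (2 * π * (μ j : ℝ) / N)) := by
            intro μ
            simp [zdot]
          simp only [harg2]
          rw [root_sum_multi n N hN1 (b - u - m)]
          by_cases hc : u = b - m
          · rw [if_pos ((hcond u hu b hb).mpr hc), if_pos hc]
          · rw [if_neg (fun hd => hc ((hcond u hu b hb).mp hd)), if_neg hc]
      _ = ∑ i ∈ Finset.range s, ∑ b ∈ R,
            ((f i (b - m) : ℂ) * f i b *
              (if ∀ j, (lam : ℤ) ∣ (b j - l j) then ((lam : ℂ) ^ n) else 0)) * (N : ℂ) ^ n := by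
          refine Finset.sum_congr rfl fun i hi => ?_
          rw [Finset.sum_comm]
          refine Finset.sum_congr rfl fun b hb => ?_
          have hsplit : ∀ u : Fin n → ℤ,
              ((f i u : ℂ) * f i b *
                (if ∀ j, (lam : ℤ) ∣ (b j - l j) then ((lam : ℂ) ^ n) else 0)) *
                (if u = b - m then (N : ℂ) ^ n else 0) =
              if u = b - m then
                ((f i u : ℂ) * f i b *
                  (if ∀ j, (lam : ℤ) ∣ (b j - l j) then ((lam : ℂ) ^ n) else 0)) * (N : ℂ) ^ n
              else 0 := by
            intro u
            split <;> simp
          simp only [hsplit]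
          rw [Finset.sum_ite_eq' R (b - m) (fun u =>
            ((f i u : ℂ) * f i b *
              (if ∀ j, (lam : ℤ) ∣ (b j - l j) then ((lam : ℂ) ^ n) else 0)) * (N : ℂ) ^ n)]
          by_cases hmem : b - m ∈ R
          · rw [if_pos hmem]
          · rw [if_neg hmem]
            have hz : f i (b - m) = 0 := by
              by_contra hne
              exact hmem (hsupp i hi hne)
            simp [hz]
      _ = (∑ i ∈ Finset.range s, ∑ b ∈ R,
            (if ∀ j, (lam : ℤ) ∣ (b j - l j) then ((f i (b - m) : ℂ) * f i b) else 0))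
          * ((N : ℂ) ^ n * (lam : ℂ) ^ n) := by
          rw [Finset.sum_mul]
          refine Finset.sum_congr rfl fun i _ => ?_
          rw [Finset.sum_mul]
          refine Finset.sum_congr rfl fun b _ => ?_
          by_cases hc : ∀ j, (lam : ℤ) ∣ (b j - l j)
          · rw [if_pos hc, if_pos hc]; ring
          · rw [if_neg hc, if_neg hc]; ring
  have := hS.symm.trans hL
  exact (mul_right_cancel₀ (mul_ne_zero hNne hlamne) this).symm

lemma conv_tilde_eq {n : ℕ} (g : (Fin n → ℤ) → ℝ) (x : (Fin n → ℤ) → ℂ)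
    (X : Finset (Fin n → ℤ)) (hx : Function.support x ⊆ X) (b : Fin n → ℤ) :
    conv (fun j => (g (-j) : ℂ)) x b = ∑ l ∈ X, (g (l - b) : ℂ) * x l := by
  show ∑ᶠ j, (g (-j) : ℂ) * x (b - j) = _
  rw [finsum_eq_sum_of_support_subset _
    (s := X.image (fun l => b - l)) (by
      intro j hj
      have hxj : x (b - j) ≠ 0 := by
        intro h0
        simp [Function.mem_support, h0] at hj
      have : b - j ∈ X := hx hxj
      simp only [Finset.coe_image, Set.mem_image, Finset.mem_coe]
      exact ⟨b - j, this, by rw [sub_sub_cancel]⟩)]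
  rw [Finset.sum_image (fun l1 _ l2 _ h12 => by
    have := congrArg (fun t => b - t) h12
    simpa using this)]
  refine Finset.sum_congr rfl fun l _ => ?_
  rw [neg_sub, sub_sub_cancel]

lemma conv_outer {n : ℕ} (lam : ℕ) (g : (Fin n → ℤ) → ℝ) (R : Finset (Fin n → ℤ))
    (hg : Function.support g ⊆ R) (y : (Fin n → ℤ) → ℂ) (k : Fin n → ℤ) :
    conv (fun j => (g j : ℂ)) (downUp n lam y) k =
      ∑ b ∈ R.image (fun t => k - t),
        (g (k - b) : ℂ) * (if ∀ t, (lam : ℤ) ∣ b t then y b else 0) := by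
  show ∑ᶠ j, (g j : ℂ) * downUp n lam y (k - j) = _
  rw [finsum_eq_sum_of_support_subset _ (s := R) (by
    intro j hj
    apply hg
    intro h0
    simp [Function.mem_support, h0] at hj)]
  rw [Finset.sum_image (fun l1 _ l2 _ h12 => by
    have := congrArg (fun t => k - t) h12
    simpa using this)]
  refine Finset.sum_congr rfl fun t _ => ?_
  rw [sub_sub_cancel]
  rfl


/-- perfect reconstruction. If the masks of `h, h_1, …, h_r` satisfy the
UEP condition, then for every finitely supported `x : ℤⁿ → ℂ`,
`x = h ⋆ D(h̃ ⋆ x) + Σ_i h_i ⋆ D(h̃_i ⋆ x)`. -/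
theorem tight_filter_bank_perfect_reconstruction (n lam r : ℕ) (hn : 1 ≤ n)
    (hlam : 2 ≤ lam)
    (h : (Fin n → ℤ) → ℝ) (hfin : (Function.support h).Finite)
    (hw : ℕ → (Fin n → ℤ) → ℝ) (hwfin : ∀ i < r, (Function.support (hw i)).Finite)
    (huep : ∀ ω : Fin n → ℝ, ∀ γ ∈ GammaSet n lam,
      ((γ = 0 →
        mask n h ω * conj (mask n h (ω + γ))
          + ∑ i ∈ Finset.range r, mask n (hw i) ω * conj (mask n (hw i) (ω + γ))
          = (lam : ℂ) ^ n)
      ∧ (γ ≠ 0 →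
        mask n h ω * conj (mask n h (ω + γ))
          + ∑ i ∈ Finset.range r, mask n (hw i) ω * conj (mask n (hw i) (ω + γ))
          = 0))) :
    ∀ x : (Fin n → ℤ) → ℂ, (Function.support x).Finite →
      ∀ k : Fin n → ℤ,
        x k = conv (fun j => (h j : ℂ))
                (downUp n lam (conv (fun j => (h (-j) : ℂ)) x)) k
            + ∑ i ∈ Finset.range r,
                conv (fun j => (hw i j : ℂ))
                  (downUp n lam (conv (fun j => (hw i (-j) : ℂ)) x)) k := by
  intro x hxfin k
  haveI : NeZero lam := ⟨by omega⟩
  set F : ℕ → (Fin n → ℤ) → ℝ := fun i => if i = 0 then h else hw (i - 1) with hF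
  have hFfin : ∀ i ∈ Finset.range (r + 1), (Function.support (F i)).Finite := by
    intro i hi
    match i with
    | 0 => simpa [hF] using hfin
    | (j+1) =>
      have hj : j < r := by
        have := Finset.mem_range.mp hi
        omega
      simpa [hF] using hwfin j hj
  set R : Finset (Fin n → ℤ) :=
    (Finset.range (r + 1)).attach.biUnion (fun i => (hFfin i.1 i.2).toFinset) with hR
  have hsupp : ∀ i ∈ Finset.range (r + 1), Function.support (F i) ⊆ R := by
    intro i hi z hz
    exact Finset.mem_biUnion.2 ⟨⟨i, hi⟩, Finset.mem_attach _ _,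
      (hFfin i hi).mem_toFinset.2 hz⟩
  set X : Finset (Fin n → ℤ) := hxfin.toFinset with hX
  have hx : Function.support x ⊆ X := by
    rw [hX, Set.Finite.coe_toFinset]
  have hmask : ∀ ω : Fin n → ℝ, ∀ ν : Fin n → Fin lam,
      ∑ i ∈ Finset.range (r + 1),
        mask n (F i) ω * conj (mask n (F i) (ω + fun j => 2 * π * (ν j : ℝ) / lam)) =
        if ν = (fun _ => (⟨0, by omega⟩ : Fin lam)) then (lam : ℂ) ^ n else 0 := by
    intro ω ν
    have hsum : ∑ i ∈ Finset.range (r + 1),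
        mask n (F i) ω * conj (mask n (F i) (ω + fun j => 2 * π * (ν j : ℝ) / lam)) =
        mask n h ω * conj (mask n h (ω + fun j => 2 * π * (ν j : ℝ) / lam))
          + ∑ i ∈ Finset.range r,
            mask n (hw i) ω * conj (mask n (hw i) (ω + fun j => 2 * π * (ν j : ℝ) / lam)) := by
      rw [Finset.sum_range_succ', add_comm]
      have h0 : F 0 = h := by simp [hF]
      have hsucc : ∀ i : ℕ, F (i + 1) = hw i := fun i => by simp [hF]
      simp only [h0, hsucc]
    have hmem : (fun j => 2 * π * (ν j : ℝ) / lam) ∈ GammaSet n lam := ⟨ν, rfl⟩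
    have h01 := huep ω _ hmem
    by_cases hν : ν = (fun _ => (⟨0, by omega⟩ : Fin lam))
    · rw [if_pos hν, hsum]
      refine h01.1 ?_
      subst hν
      funext j
      simp
    · have hγ0 : (fun j => 2 * π * (ν j : ℝ) / lam) ≠ (0 : Fin n → ℝ) := by
        intro hc
        apply hν
        funext j
        have hcj := congrFun hc j
        simp only [Pi.zero_apply] at hcj
        have hlam0 : (lam : ℝ) ≠ 0 := by positivity
        have : (ν j : ℝ) = 0 := by
          rcases div_eq_zero_iff.mp hcj with h1 | h1
          · rcases mul_eq_zero.mp h1 with h2 | h2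
            · rcases mul_eq_zero.mp h2 with h3 | h3
              · norm_num at h3
              · exact absurd h3 Real.pi_ne_zero
            · exact h2
          · exact absurd h1 hlam0
        have : (ν j : ℕ) = 0 := by exact_mod_cast this
        exact Fin.ext this
      rw [if_neg hν, hsum]
      exact h01.2 hγ0
  have key := keyId n lam (r + 1) hlam F R hsupp hmask k
  set B : Finset (Fin n → ℤ) := R.image (fun t => k - t) with hB
  have hBmem : ∀ b, b ∈ B ↔ k - b ∈ R := by
    intro b
    rw [hB]
    constructor
    · intro hb
      obtain ⟨t, ht, rfl⟩ := Finset.mem_image.mp hb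
      rwa [sub_sub_cancel]
    · intro hb
      exact Finset.mem_image.mpr ⟨k - b, hb, by rw [sub_sub_cancel]⟩
  refine Eq.symm ?_
  have hgoal : conv (fun j => (h j : ℂ)) (downUp n lam (conv (fun j => (h (-j) : ℂ)) x)) k
      + ∑ i ∈ Finset.range r,
          conv (fun j => (hw i j : ℂ)) (downUp n lam (conv (fun j => (hw i (-j) : ℂ)) x)) k
      = ∑ i ∈ Finset.range (r + 1),
          conv (fun j => (F i j : ℂ)) (downUp n lam (conv (fun j => (F i (-j) : ℂ)) x)) k := by
    rw [Finset.sum_range_succ', add_comm]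
    have h0 : F 0 = h := by simp [hF]
    have hsucc : ∀ i : ℕ, F (i + 1) = hw i := fun i => by simp [hF]
    simp only [h0, hsucc]
  rw [hgoal]
  calc ∑ i ∈ Finset.range (r + 1),
        conv (fun j => (F i j : ℂ)) (downUp n lam (conv (fun j => (F i (-j) : ℂ)) x)) k
      = ∑ i ∈ Finset.range (r + 1), ∑ b ∈ B,
          (F i (k - b) : ℂ) *
            (if ∀ t, (lam : ℤ) ∣ b t then ∑ l ∈ X, (F i (l - b) : ℂ) * x l else 0) := by
        refine Finset.sum_congr rfl fun i hi => ?_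
        rw [conv_outer lam (F i) R (hsupp i hi) _ k]
        refine Finset.sum_congr rfl fun b _ => ?_
        congr 1
        split_ifs with hc
        · rw [conv_tilde_eq (F i) x X hx b]
        · rfl
    _ = ∑ i ∈ Finset.range (r + 1), ∑ b ∈ B, ∑ l ∈ X,
          (if ∀ t, (lam : ℤ) ∣ b t then (F i (k - b) : ℂ) * (F i (l - b)) * x l else 0) := by
        refine Finset.sum_congr rfl fun i _ => Finset.sum_congr rfl fun b _ => ?_
        split_ifs with hc
        · rw [Finset.mul_sum]
          exact Finset.sum_congr rfl fun l _ => by ring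
        · simp
    _ = ∑ l ∈ X, ∑ i ∈ Finset.range (r + 1), ∑ b ∈ B,
          (if ∀ t, (lam : ℤ) ∣ b t then (F i (k - b) : ℂ) * (F i (l - b)) * x l else 0) := by
        exact (Finset.sum_congr rfl fun i _ => Finset.sum_comm).trans Finset.sum_comm
    _ = ∑ l ∈ X, x l * (∑ i ∈ Finset.range (r + 1), ∑ b ∈ B,
          (if ∀ t, (lam : ℤ) ∣ b t then (F i (k - b) : ℂ) * (F i (l - b)) else 0)) := by
        refine Finset.sum_congr rfl fun l _ => ?_
        rw [Finset.mul_sum]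
        refine Finset.sum_congr rfl fun i _ => ?_
        rw [Finset.mul_sum]
        refine Finset.sum_congr rfl fun b _ => ?_
        split_ifs with hc
        · ring
        · ring
    _ = ∑ l ∈ X, x l * (if k = l then 1 else 0) := by
        refine Finset.sum_congr rfl fun l _ => ?_
        congr 1
        have key := keyId n lam (r + 1) hlam F R hsupp hmask k l
        rw [← key]
        refine Finset.sum_congr rfl fun i hi => ?_
        -- reindex b ↦ l - b and extend/shrink the index set
        have e1 : ∑ b ∈ B,
            (if ∀ t, (lam : ℤ) ∣ b t then (F i (k - b) : ℂ) * (F i (l - b)) else 0) =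
            ∑ bk ∈ B.image (fun t => l - t),
              (if ∀ j, (lam : ℤ) ∣ (bk j - l j)
                then ((F i (bk - (l - k)) : ℂ) * F i bk) else 0) := by
          have e0 : ∑ bk ∈ B.image (fun t => l - t),
              (if ∀ j, (lam : ℤ) ∣ (bk j - l j)
                then ((F i (bk - (l - k)) : ℂ) * F i bk) else 0) =
              ∑ b ∈ B,
                (if ∀ j, (lam : ℤ) ∣ ((l - b) j - l j)
                  then ((F i ((l - b) - (l - k)) : ℂ) * F i (l - b)) else 0) :=
            Finset.sum_image (fun t1 _ t2 _ h12 => by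
              have := congrArg (fun t => l - t) h12
              simpa using this)
          rw [e0]
          refine Finset.sum_congr rfl fun b _ => ?_
          have hiff : (∀ t, (lam : ℤ) ∣ b t) ↔ (∀ j, (lam : ℤ) ∣ ((l - b) j - l j)) := by
            refine forall_congr' fun t => ?_
            have hcoord : (l - b) t - l t = -(b t) := by simp
            rw [hcoord, dvd_neg]
          have hval : (l - b) - (l - k) = k - b := by abel
          exact if_congr hiff (by rw [hval]) rfl
        rw [e1]
        have hvanish1 : ∀ bk ∈ (B.image (fun t => l - t)) ∪ R,
            bk ∉ B.image (fun t => l - t) →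
            (if ∀ j, (lam : ℤ) ∣ (bk j - l j)
              then ((F i (bk - (l - k)) : ℂ) * F i bk) else 0) = 0 := by
          intro bk _ hbk
          have hnot : bk - (l - k) ∉ R := by
            intro hmem
            apply hbk
            refine Finset.mem_image.mpr ⟨k - (bk - (l - k)), ?_, by abel⟩
            exact (hBmem _).mpr (by rw [sub_sub_cancel]; exact hmem)
          have hz : F i (bk - (l - k)) = 0 := by
            by_contra hne
            exact hnot (hsupp i hi hne)
          simp [hz]
        have hvanish2 : ∀ bk ∈ (B.image (fun t => l - t)) ∪ R, bk ∉ R →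
            (if ∀ j, (lam : ℤ) ∣ (bk j - l j)
              then ((F i (bk - (l - k)) : ℂ) * F i bk) else 0) = 0 := by
          intro bk _ hbk
          have hz : F i bk = 0 := by
            by_contra hne
            exact hbk (hsupp i hi hne)
          simp [hz]
        rw [Finset.sum_subset (Finset.subset_union_left) hvanish1,
          ← Finset.sum_subset (Finset.subset_union_right) hvanish2]
    _ = x k := by
        have : ∀ l, x l * (if k = l then (1 : ℂ) else 0) =
            if k = l then x l else 0 := by
          intro l
          split_ifs <;> simp
        simp only [this]
        rw [Finset.sum_ite_eq X k (fun l => x l)]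
        split_ifs with hk
        · rfl
        · by_contra hne
          apply hk
          apply hxfin.mem_toFinset.2
          exact Function.mem_support.2 fun h0 => hne h0.symm
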